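/- arXiv:2405.14819 — 2 statements merged into one kernel-verified Lean document; each statement's English description precedes it below -/
import Mathlib

section
/- Let α ∈ [1/2, 1), ρ > 0, σ > 0, T > 0, and let (μ_n)_{n∈ℕ} be a sequence of real numbers with μ_n ≥ 1 for all n. Then there exists a constant C > 0 such that for every t ∈ (0, T] and every square-summable sequence (k_n)_{n∈ℕ} of complex numbers, Σ_n ( μ_n^{3-4α-2σ} · exp(-2ρ·μ_n^{1-α}·t) + μ_n^{2α-2σ} · exp(-2ρ·μ_n^α·t) ) · |k_n|² ≤ C · t^{-2·max(1-σ/α,0)} · Σ_n |k_n|². -/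
/-- For `s > 0` and `m > 0`, `s^m * exp (-s) ≤ m^m`. -/
lemma aux_rpow_exp_bound (s m : ℝ) (hs : 0 < s) (hm : 0 < m) :
    s ^ m * Real.exp (-s) ≤ m ^ m := by
  have h1 : s / m ≤ Real.exp (s / m) := by
    have := Real.add_one_le_exp (s / m)
    linarith
  have h2 : (s / m) ^ m ≤ Real.exp (s / m) ^ m :=
    Real.rpow_le_rpow (by positivity) h1 hm.le
  have h3 : Real.exp (s / m) ^ m = Real.exp s := by
    rw [← Real.exp_mul, div_mul_cancel₀ _ hm.ne']
  have h4 : (s / m) ^ m = s ^ m / m ^ m := Real.div_rpow hs.le hm.le m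
  rw [h4, h3] at h2
  have h5 : s ^ m ≤ m ^ m * Real.exp s := by
    rw [div_le_iff₀ (by positivity)] at h2
    linarith [h2]
  calc s ^ m * Real.exp (-s) ≤ m ^ m * Real.exp s * Real.exp (-s) := by
        exact mul_le_mul_of_nonneg_right h5 (Real.exp_pos _).le
    _ = m ^ m := by rw [mul_assoc, ← Real.exp_add, add_neg_cancel, Real.exp_zero, mul_one]

/-- Pointwise bound: `x^p * exp(-c x^q t) ≤ M * t^(-b)` for `x ≥ 1`, `0 < t ≤ T`,
provided `p ≤ b q`. -/
lemma aux_pointwise (c q p b T : ℝ) (hc : 0 < c) (hq : 0 < q) (hb : 0 ≤ b)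
    (hpb : p ≤ b * q) (hT : 0 < T) :
    ∃ M : ℝ, 0 < M ∧ ∀ x : ℝ, 1 ≤ x → ∀ t : ℝ, 0 < t → t ≤ T →
      x ^ p * Real.exp (-c * x ^ q * t) ≤ M * t ^ (-b) := by
  rcases le_or_gt p 0 with hp | hp
  · refine ⟨max 1 (T ^ b), lt_of_lt_of_le one_pos (le_max_left _ _), fun x hx t ht htT => ?_⟩
    have hx0 : (0:ℝ) < x := lt_of_lt_of_le one_pos hx
    have h1 : x ^ p ≤ 1 := Real.rpow_le_one_of_one_le_of_nonpos hx hp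
    have h2 : Real.exp (-c * x ^ q * t) ≤ 1 := by
      apply Real.exp_le_one_iff.mpr
      have h3 : 0 < x ^ q := Real.rpow_pos_of_pos hx0 q
      have : 0 < c * x ^ q * t := by positivity
      linarith
    have hlhs : x ^ p * Real.exp (-c * x ^ q * t) ≤ 1 := by
      calc x ^ p * Real.exp (-c * x ^ q * t) ≤ 1 * 1 :=
            mul_le_mul h1 h2 (Real.exp_pos _).le one_pos.le
        _ = 1 := one_mul 1
    have ht' : T ^ (-b) ≤ t ^ (-b) :=
      Real.rpow_le_rpow_of_nonpos ht htT (neg_nonpos.mpr hb)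
    have : (1:ℝ) ≤ T ^ b * t ^ (-b) := by
      calc (1:ℝ) = T ^ b * T ^ (-b) := by
            rw [← Real.rpow_add hT, add_neg_cancel, Real.rpow_zero]
        _ ≤ T ^ b * t ^ (-b) := by
            exact mul_le_mul_of_nonneg_left ht' (Real.rpow_pos_of_pos hT b).le
    calc x ^ p * Real.exp (-c * x ^ q * t) ≤ 1 := hlhs
      _ ≤ T ^ b * t ^ (-b) := this
      _ ≤ max 1 (T ^ b) * t ^ (-b) := by
          exact mul_le_mul_of_nonneg_right (le_max_right _ _)
            (Real.rpow_pos_of_pos ht (-b)).le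
  · set m := p / q with hm_def
    have hm : 0 < m := div_pos hp hq
    have hmb : m ≤ b := by
      rw [hm_def, div_le_iff₀ hq]; linarith [hpb]
    refine ⟨m ^ m * c ^ (-m) * max 1 T ^ (b - m), by positivity, fun x hx t ht htT => ?_⟩
    have hx0 : (0:ℝ) < x := lt_of_lt_of_le one_pos hx
    have hxq : (0:ℝ) < x ^ q := Real.rpow_pos_of_pos hx0 q
    set s := c * x ^ q * t with hs_def
    have hs : 0 < s := by positivity
    have key := aux_rpow_exp_bound s m hs hm
    have hsm : s ^ m = c ^ m * x ^ p * t ^ m := by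
      rw [hs_def, Real.mul_rpow (by positivity) ht.le, Real.mul_rpow hc.le hxq.le,
        ← Real.rpow_mul hx0.le]
      congr 2
      rw [hm_def]
      field_simp
    have hexp : Real.exp (-s) = Real.exp (-c * x ^ q * t) := by
      rw [hs_def]; ring_nf
    rw [hsm, hexp] at key
    -- key : c ^ m * x ^ p * t ^ m * exp(-c x^q t) ≤ m ^ m
    have hc' : (0:ℝ) < c ^ m := Real.rpow_pos_of_pos hc m
    have htm : (0:ℝ) < t ^ m := Real.rpow_pos_of_pos ht m
    have h6 : x ^ p * Real.exp (-c * x ^ q * t) ≤ m ^ m * c ^ (-m) * t ^ (-m) := by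
      have hpos : 0 < c ^ m * t ^ m := by positivity
      rw [Real.rpow_neg hc.le, Real.rpow_neg ht.le,
        show m ^ m * (c ^ m)⁻¹ * (t ^ m)⁻¹ = m ^ m / (c ^ m * t ^ m) by ring,
        le_div_iff₀ hpos]
      calc x ^ p * Real.exp (-c * x ^ q * t) * (c ^ m * t ^ m)
            = c ^ m * x ^ p * t ^ m * Real.exp (-c * x ^ q * t) := by ring
        _ ≤ m ^ m := key
    have h7 : t ^ (-m) ≤ max 1 T ^ (b - m) * t ^ (-b) := by
      have : t ^ (-m) = t ^ (b - m) * t ^ (-b) := by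
        rw [← Real.rpow_add ht]; ring_nf
      rw [this]
      apply mul_le_mul_of_nonneg_right _ (Real.rpow_pos_of_pos ht (-b)).le
      exact Real.rpow_le_rpow ht.le (le_trans htT (le_max_right 1 T)) (by linarith)
    calc x ^ p * Real.exp (-c * x ^ q * t)
        ≤ m ^ m * c ^ (-m) * t ^ (-m) := h6
      _ ≤ m ^ m * c ^ (-m) * (max 1 T ^ (b - m) * t ^ (-b)) := by
          exact mul_le_mul_of_nonneg_left h7 (by positivity)
      _ = m ^ m * c ^ (-m) * max 1 T ^ (b - m) * t ^ (-b) := by ring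

/-- Diagonal `ℓ²` form of the estimate `‖A e^{tA} 𝓛‖ ≤ C t^{-β}` with
`β = max(1-σ/α,0)` for the damped wave generator, `α ∈ [1/2, 1)`. -/
theorem damped_wave_diagonal_bound_large_alpha
    (α ρ σ T : ℝ) (hα₁ : 1 / 2 ≤ α) (hα₂ : α < 1) (hρ : 0 < ρ) (hσ : 0 < σ) (hT : 0 < T)
    (μ : ℕ → ℝ) (hμ : ∀ n, 1 ≤ μ n) :
    ∃ C : ℝ, 0 < C ∧ ∀ t : ℝ, 0 < t → t ≤ T → ∀ k : ℕ → ℂ,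
      Summable (fun n => ‖k n‖ ^ 2) →
      ∑' n : ℕ, (μ n ^ (3 - 4 * α - 2 * σ) * Real.exp (-2 * ρ * μ n ^ (1 - α) * t)
            + μ n ^ (2 * α - 2 * σ) * Real.exp (-2 * ρ * μ n ^ α * t)) * ‖k n‖ ^ 2
        ≤ C * t ^ (-(2 * max (1 - σ / α) 0)) * ∑' n : ℕ, ‖k n‖ ^ 2 := by
  have hα0 : (0:ℝ) < α := by linarith
  set β := max (1 - σ / α) 0 with hβ_def
  have hβ0 : 0 ≤ β := le_max_right _ _
  have hb0 : 0 ≤ 2 * β := by linarith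
  -- exponent inequalities
  have hineq1 : 3 - 4 * α - 2 * σ ≤ (2 * β) * (1 - α) := by
    rcases le_or_gt α σ with h | h
    · have : β ≥ 0 := hβ0
      nlinarith [mul_nonneg hb0 (by linarith : (0:ℝ) ≤ 1 - α)]
    · have hβ : β = 1 - σ / α := by
        rw [hβ_def, max_eq_left]
        have : σ / α < 1 := (div_lt_one hα0).mpr h
        linarith
      rw [hβ]
      have key : 2 * (1 - σ / α) * (1 - α) - (3 - 4 * α - 2 * σ)
          = (2 * α - 1) * (α + 2 * σ) / α := by
        field_simp
        ring
      have hnn : 0 ≤ (2 * α - 1) * (α + 2 * σ) / α :=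
        div_nonneg (mul_nonneg (by linarith) (by linarith)) hα0.le
      linarith
  have hineq2 : 2 * α - 2 * σ ≤ (2 * β) * α := by
    rcases le_or_gt α σ with h | h
    · nlinarith [mul_nonneg hb0 hα0.le]
    · have hβ : β = 1 - σ / α := by
        rw [hβ_def, max_eq_left]
        have : σ / α < 1 := (div_lt_one hα0).mpr h
        linarith
      rw [hβ]
      have hd : σ / α * α = σ := div_mul_cancel₀ σ hα0.ne'
      linarith [hd]
  obtain ⟨M₁, hM₁, hbd₁⟩ := aux_pointwise (2 * ρ) (1 - α) (3 - 4 * α - 2 * σ) (2 * β) T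
    (by linarith) (by linarith) hb0 hineq1 hT
  obtain ⟨M₂, hM₂, hbd₂⟩ := aux_pointwise (2 * ρ) α (2 * α - 2 * σ) (2 * β) T
    (by linarith) hα0 hb0 hineq2 hT
  refine ⟨M₁ + M₂, by positivity, fun t ht htT k hk => ?_⟩
  have htb : (0:ℝ) < t ^ (-(2 * β)) := Real.rpow_pos_of_pos ht _
  have hpt : ∀ n, (μ n ^ (3 - 4 * α - 2 * σ) * Real.exp (-2 * ρ * μ n ^ (1 - α) * t)
        + μ n ^ (2 * α - 2 * σ) * Real.exp (-2 * ρ * μ n ^ α * t))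
      ≤ (M₁ + M₂) * t ^ (-(2 * β)) := by
    intro n
    have e1 := hbd₁ (μ n) (hμ n) t ht htT
    have e2 := hbd₂ (μ n) (hμ n) t ht htT
    have r1 : -(2 * ρ) * μ n ^ (1 - α) * t = -2 * ρ * μ n ^ (1 - α) * t := by ring
    have r2 : -(2 * ρ) * μ n ^ α * t = -2 * ρ * μ n ^ α * t := by ring
    rw [r1] at e1; rw [r2] at e2
    calc _ ≤ M₁ * t ^ (-(2 * β)) + M₂ * t ^ (-(2 * β)) := add_le_add e1 e2
      _ = (M₁ + M₂) * t ^ (-(2 * β)) := by ring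
  have hpt' : ∀ n, (μ n ^ (3 - 4 * α - 2 * σ) * Real.exp (-2 * ρ * μ n ^ (1 - α) * t)
        + μ n ^ (2 * α - 2 * σ) * Real.exp (-2 * ρ * μ n ^ α * t)) * ‖k n‖ ^ 2
      ≤ (M₁ + M₂) * t ^ (-(2 * β)) * ‖k n‖ ^ 2 := fun n =>
    mul_le_mul_of_nonneg_right (hpt n) (by positivity)
  have hsum2 : Summable (fun n => (M₁ + M₂) * t ^ (-(2 * β)) * ‖k n‖ ^ 2) :=
    hk.mul_left _
  have hsum1 : Summable (fun n =>
      (μ n ^ (3 - 4 * α - 2 * σ) * Real.exp (-2 * ρ * μ n ^ (1 - α) * t)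
        + μ n ^ (2 * α - 2 * σ) * Real.exp (-2 * ρ * μ n ^ α * t)) * ‖k n‖ ^ 2) := by
    apply Summable.of_nonneg_of_le _ hpt' hsum2
    intro n
    have h1 : (0:ℝ) < μ n := lt_of_lt_of_le one_pos (hμ n)
    positivity
  calc ∑' n : ℕ, (μ n ^ (3 - 4 * α - 2 * σ) * Real.exp (-2 * ρ * μ n ^ (1 - α) * t)
            + μ n ^ (2 * α - 2 * σ) * Real.exp (-2 * ρ * μ n ^ α * t)) * ‖k n‖ ^ 2
      ≤ ∑' n : ℕ, (M₁ + M₂) * t ^ (-(2 * β)) * ‖k n‖ ^ 2 :=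
        Summable.tsum_le_tsum hpt' hsum1 hsum2
    _ = (M₁ + M₂) * t ^ (-(2 * β)) * ∑' n : ℕ, ‖k n‖ ^ 2 := tsum_mul_left
end

section
/- Let T > 0, c > 0, ρ > 0, δ > 0, γ ≥ 0 and α ∈ (0, 1) satisfy δ·(2γ + α) > 1. Then there exists η ∈ (0, 1) such that ∫_0^T t^{-η} · ( Σ_{n≥1} (c·n^δ)^{-2γ} · exp(-2ρ·(c·n^δ)^α·t) ) dt < ∞. -/
open MeasureTheory

lemma exp_neg_le_rpow_neg {x β : ℝ} (hx : 0 < x) (hβ0 : 0 < β) (hβ1 : β ≤ 1) :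
    Real.exp (-x) ≤ x ^ (-β) := by
  rw [Real.rpow_neg hx.le, Real.exp_neg]
  have hxb : 0 < x ^ β := Real.rpow_pos_of_pos hx β
  apply inv_anti₀ hxb
  have h1 : x ^ β ≤ max 1 x := by
    rcases le_total x 1 with h | h
    · exact le_max_of_le_left (Real.rpow_le_one hx.le h hβ0.le)
    · calc x ^ β ≤ x ^ (1 : ℝ) := Real.rpow_le_rpow_of_exponent_le h hβ1
        _ = x := Real.rpow_one x
        _ ≤ max 1 x := le_max_right _ _
  refine h1.trans (max_le ?_ ?_)
  · exact Real.one_le_exp hx.le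
  · linarith [Real.add_one_le_exp x]

/-- Trace regularity of the stochastic convolution for the damped wave equation: if
`δ·(2γ + α) > 1`, then there exists `η ∈ (0,1)` such that
`∫_0^T t^{-η} · Σ_{n≥1} (c·n^δ)^{-2γ} · exp(-2ρ·(c·n^δ)^α·t) dt < ∞`. -/
theorem damped_wave_trace_regularity
    (T c ρ δ γ α : ℝ) (hT : 0 < T) (hc : 0 < c) (hρ : 0 < ρ) (hδ : 0 < δ)
    (hγ : 0 ≤ γ) (hα₀ : 0 < α) (hα₁ : α < 1) (h : 1 < δ * (2 * γ + α)) :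
    ∃ η : ℝ, 0 < η ∧ η < 1 ∧
      IntegrableOn
        (fun t : ℝ => t ^ (-η) *
          ∑' n : ℕ, (c * ((n : ℝ) + 1) ^ δ) ^ (-(2 * γ)) *
            Real.exp (-2 * ρ * (c * ((n : ℝ) + 1) ^ δ) ^ α * t))
        (Set.Ioc 0 T) := by
  -- choose exponents
  set r : ℝ := (1 / δ - 2 * γ) / α with hr
  have hδα : 1 / δ < 2 * γ + α := by
    rw [div_lt_iff₀ hδ]; nlinarith
  have hrlt : r < 1 := by
    rw [hr, div_lt_one hα₀]; linarith
  set β : ℝ := (max r 0 + 1) / 2 with hβ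
  have hmax0 : 0 ≤ max r 0 := le_max_right _ _
  have hmax1 : max r 0 < 1 := max_lt hrlt zero_lt_one
  have hβ0 : 0 < β := by rw [hβ]; linarith
  have hβ1 : β < 1 := by rw [hβ]; linarith
  have hβr : r < β := by
    have : r ≤ max r 0 := le_max_left _ _
    rw [hβ]; linarith
  set η : ℝ := (1 - β) / 2 with hη
  have hη0 : 0 < η := by rw [hη]; linarith
  have hη1 : η < 1 := by rw [hη]; linarith
  have hηβ : η + β < 1 := by rw [hη]; linarith
  set p : ℝ := δ * (2 * γ + α * β) with hp
  have hp1 : 1 < p := by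
    have h1 : α * r < α * β := by nlinarith
    have h2 : α * r = 1 / δ - 2 * γ := by
      rw [hr]; field_simp
    have h3 : 1 / δ < 2 * γ + α * β := by linarith
    rw [hp]
    calc (1 : ℝ) = δ * (1 / δ) := by field_simp
      _ < δ * (2 * γ + α * β) := by
          exact mul_lt_mul_of_pos_left h3 hδ
  -- summability of the p-series
  have hpsum : Summable (fun n : ℕ => ((n : ℝ) + 1) ^ (-p)) := by
    have h1 : Summable (fun n : ℕ => ((n : ℝ)) ^ (-p)) :=
      Real.summable_nat_rpow.mpr (by linarith)
    have h2 := (summable_nat_add_iff 1).mpr h1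
    exact h2.congr fun n => by push_cast; ring_nf
  set K : ℝ := c ^ (-(2 * γ + α * β)) * (2 * ρ) ^ (-β) with hK
  have hK0 : 0 < K := by
    rw [hK]
    exact mul_pos (Real.rpow_pos_of_pos hc _) (Real.rpow_pos_of_pos (by linarith) _)
  -- the individual terms
  set a : ℕ → ℝ → ℝ := fun n t =>
    (c * ((n : ℝ) + 1) ^ δ) ^ (-(2 * γ)) *
      Real.exp (-2 * ρ * (c * ((n : ℝ) + 1) ^ δ) ^ α * t) with ha
  have ha_nonneg : ∀ n t, 0 ≤ a n t := by
    intro n t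
    have : (0:ℝ) < c * ((n : ℝ) + 1) ^ δ := by positivity
    positivity
  -- key pointwise bound
  have key : ∀ t ∈ Set.Ioc (0 : ℝ) T, ∀ n : ℕ,
      a n t ≤ K * ((n : ℝ) + 1) ^ (-p) * t ^ (-β) := by
    intro t ht n
    have ht0 : 0 < t := ht.1
    set m : ℝ := c * ((n : ℝ) + 1) ^ δ with hm
    have hm0 : 0 < m := by positivity
    have hmα : 0 < m ^ α := Real.rpow_pos_of_pos hm0 α
    have hx0 : 0 < 2 * ρ * m ^ α * t := by positivity
    have hexp : Real.exp (-2 * ρ * m ^ α * t) ≤ (2 * ρ * m ^ α * t) ^ (-β) := by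
      have := exp_neg_le_rpow_neg hx0 hβ0 hβ1.le
      convert this using 2
      ring
    have step1 : a n t ≤ m ^ (-(2 * γ)) * (2 * ρ * m ^ α * t) ^ (-β) := by
      rw [ha]
      exact mul_le_mul_of_nonneg_left hexp (Real.rpow_nonneg hm0.le _)
    refine step1.trans_eq ?_
    have e1 : (2 * ρ * m ^ α * t) ^ (-β) =
        (2 * ρ) ^ (-β) * (m ^ α) ^ (-β) * t ^ (-β) := by
      rw [Real.mul_rpow (by positivity) ht0.le, Real.mul_rpow (by positivity) hmα.le]
    have e2 : (m ^ α) ^ (-β) = m ^ (α * (-β)) := (Real.rpow_mul hm0.le α (-β)).symm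
    have e3 : m ^ (-(2 * γ)) * m ^ (α * (-β)) = m ^ (-(2 * γ + α * β)) := by
      rw [← Real.rpow_add hm0]; ring_nf
    have e4 : m ^ (-(2 * γ + α * β)) =
        c ^ (-(2 * γ + α * β)) * ((n : ℝ) + 1) ^ (-p) := by
      have hn1 : (0:ℝ) ≤ (n : ℝ) + 1 := by positivity
      rw [hm, Real.mul_rpow hc.le (by positivity), ← Real.rpow_mul hn1]
      congr 1
      rw [hp]; ring
    rw [e1, e2]
    calc m ^ (-(2 * γ)) * ((2 * ρ) ^ (-β) * m ^ (α * (-β)) * t ^ (-β))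
        = (m ^ (-(2 * γ)) * m ^ (α * (-β))) * (2 * ρ) ^ (-β) * t ^ (-β) := by ring
      _ = m ^ (-(2 * γ + α * β)) * (2 * ρ) ^ (-β) * t ^ (-β) := by rw [e3]
      _ = K * ((n : ℝ) + 1) ^ (-p) * t ^ (-β) := by rw [e4, hK]; ring
  -- summability of the terms for each t in (0,T]
  have hsum : ∀ t ∈ Set.Ioc (0 : ℝ) T, Summable (fun n => a n t) := by
    intro t ht
    refine Summable.of_nonneg_of_le (fun n => ha_nonneg n t) (key t ht) ?_
    exact (hpsum.mul_left K).mul_right (t ^ (-β))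
  set S : ℝ := ∑' n : ℕ, ((n : ℝ) + 1) ^ (-p) with hS
  have hS0 : 0 ≤ S := tsum_nonneg fun n => Real.rpow_nonneg (by positivity) _
  -- bound on the tsum
  have htsum : ∀ t ∈ Set.Ioc (0 : ℝ) T, (∑' n, a n t) ≤ K * S * t ^ (-β) := by
    intro t ht
    have h1 : (∑' n, a n t) ≤ ∑' n : ℕ, K * ((n : ℝ) + 1) ^ (-p) * t ^ (-β) :=
      Summable.tsum_le_tsum (key t ht) (hsum t ht) ((hpsum.mul_left K).mul_right (t ^ (-β)))
    refine h1.trans_eq ?_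
    rw [tsum_mul_right, tsum_mul_left]
  -- measurability of each term
  have hmeasa : ∀ n : ℕ, Measurable (a n) := by
    intro n
    rw [ha]
    fun_prop
  -- a.e. measurability of the tsum on (0,T]
  have hG : AEMeasurable (fun t => ∑' n, a n t) (volume.restrict (Set.Ioc (0:ℝ) T)) := by
    refine aemeasurable_of_tendsto_metrizable_ae Filter.atTop
      (f := fun N => fun t => ∑ n ∈ Finset.range N, a n t)
      (fun N => (Finset.measurable_sum _ fun n _ => hmeasa n).aemeasurable) ?_
    filter_upwards [ae_restrict_mem measurableSet_Ioc] with t ht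
    exact (hsum t ht).hasSum.tendsto_sum_nat
  refine ⟨η, hη0, hη1, ?_⟩
  have hF : AEMeasurable (fun t : ℝ => t ^ (-η) * ∑' n, a n t)
      (volume.restrict (Set.Ioc (0:ℝ) T)) := by
    refine AEMeasurable.mul ?_ hG
    exact (measurable_id.pow measurable_const).aemeasurable
  have hg : IntegrableOn (fun t : ℝ => K * S * t ^ (-(η + β))) (Set.Ioc 0 T) volume := by
    have h1 : IntervalIntegrable (fun t : ℝ => t ^ (-(η + β))) volume 0 T :=
      intervalIntegral.intervalIntegrable_rpow' (by linarith)
    exact h1.1.const_mul _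
  refine Integrable.mono' hg (by exact hF.aestronglyMeasurable) ?_
  filter_upwards [ae_restrict_mem measurableSet_Ioc] with t ht
  have ht0 : 0 < t := ht.1
  have hnn : 0 ≤ t ^ (-η) * ∑' n, a n t :=
    mul_nonneg (Real.rpow_nonneg ht0.le _) (tsum_nonneg fun n => ha_nonneg n t)
  rw [Real.norm_eq_abs, abs_of_nonneg hnn]
  calc t ^ (-η) * ∑' n, a n t
      ≤ t ^ (-η) * (K * S * t ^ (-β)) :=
        mul_le_mul_of_nonneg_left (htsum t ht) (Real.rpow_nonneg ht0.le _)
    _ = K * S * t ^ (-(η + β)) := by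
        rw [show -(η + β) = -η + -β by ring, Real.rpow_add ht0]
        ring
end
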